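/- Let f : [0,1] → [0,1] be a homeomorphism with NW(f) = Fix(f) = {0, 1}, and let k ≥ 1. Let f^{×k} : [0,1]^k → [0,1]^k denote the k-fold product map f^{×k}(x_1,…,x_k) = (f(x_1),…,f(x_k)), and let Ã(k) := {(x_1,…,x_k) ∈ [0,1]^k : x_1 < x_2 < … < x_k}. Then h_pol(f^{×k}; Ã(k)) = k. -/

import Mathlib

open Filter Topology TopologicalSpace Set
open scoped ENNReal

/-- The dynamic distance `d_n^f(x,y) = max_{0 ≤ k ≤ n-1} d(f^k x, f^k y)`. -/
noncomputable def dynDist {X : Type*} [MetricSpace X] (f : X → X) (n : ℕ) (x y : X) : ℝ :=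
  ((Finset.range n).sup fun k => nndist (f^[k] x) (f^[k] y) : NNReal)

/-- A finite set `E` is `(n,ε)`-separated for `f`. -/
def IsDynSeparated {X : Type*} [MetricSpace X] (f : X → X) (n : ℕ) (ε : ℝ) (E : Finset X) :
    Prop :=
  ∀ x ∈ E, ∀ y ∈ E, x ≠ y → ε ≤ dynDist f n x y

/-- `S(n,ε;Y)`: the maximal cardinality of an `(n,ε)`-separated subset of `Y`. -/
noncomputable def maxSep {X : Type*} [MetricSpace X] (f : X → X) (Y : Set X) (n : ℕ) (ε : ℝ) :
    ℕ :=
  sSup {m : ℕ | ∃ E : Finset X, ↑E ⊆ Y ∧ E.card = m ∧ IsDynSeparated f n ε E}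

/-- The polynomial entropy `h_pol(f;Y)`.  Since `ε ↦ S(n,ε;Y)` is nonincreasing, the limit as
`ε → 0` of the `limsup` coincides with the supremum over `ε > 0`. -/
noncomputable def polEnt {X : Type*} [MetricSpace X] (f : X → X) (Y : Set X) : ℝ≥0∞ :=
  ⨆ (ε : ℝ) (_ : 0 < ε),
    Filter.atTop.limsup fun n : ℕ =>
      ENNReal.ofReal (Real.log (maxSep f Y n ε) / Real.log n)

/-- The set of non-wandering points of `f`. -/
def nonWandering {X : Type*} [TopologicalSpace X] (f : X → X) : Set X :=
  {p | ∀ U ∈ nhds p, ∃ n : ℕ, 1 ≤ n ∧ (f^[n] '' U ∩ U).Nonempty}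

/-- The induced map `2^f` on the hyperspace of nonempty closed (= compact) subsets of a
compact metric space. -/
noncomputable def induced2 {X : Type*} [TopologicalSpace X] (f : X → X) (hf : Continuous f) :
    NonemptyCompacts X → NonemptyCompacts X :=
  fun A => ⟨⟨f '' A, A.isCompact.image hf⟩, A.nonempty.image f⟩

/-- The hyperspace `C(X)` of subcontinua (nonempty closed connected subsets) of `X`. -/
abbrev Subcontinua (X : Type*) [TopologicalSpace X] :=
  {A : NonemptyCompacts X // IsConnected (A : Set X)}

/-- The induced map `C(f)` on the hyperspace of subcontinua. -/
noncomputable def inducedC {X : Type*} [TopologicalSpace X] (f : X → X) (hf : Continuous f) :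
    Subcontinua X → Subcontinua X :=
  fun A => ⟨induced2 f hf A.1, A.2.image f hf.continuousOn⟩

/-- The `k`-fold symmetric product `X^{*k}`: nonempty subsets of `X` with at most `k` points. -/
abbrev SymProd (X : Type*) [TopologicalSpace X] (k : ℕ) :=
  {A : NonemptyCompacts X // (A : Set X).Finite ∧ (A : Set X).ncard ≤ k}

/-- The induced map `f^{*k}` on the `k`-fold symmetric product. -/
noncomputable def inducedSym {X : Type*} [TopologicalSpace X] (f : X → X) (hf : Continuous f)
    (k : ℕ) : SymProd X k → SymProd X k :=
  fun A => ⟨induced2 f hf A.1, A.2.1.image f, le_trans (Set.ncard_image_le A.2.1) A.2.2⟩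

/-- Sets `U 0, …, U (L-1)` are mutually singular for `f`. -/
def MutuallySingularSets {X : Type*} [TopologicalSpace X] (f : X → X) {L : ℕ}
    (U : Fin L → Set X) : Prop :=
  ∀ M : ℕ, ∃ x : X, ∃ n : Fin L → ℕ, (∀ j, 1 ≤ n j ∧ f^[n j] x ∈ U j) ∧
    ∀ i j, i ≠ j → (M : ℤ) < |(n i : ℤ) - (n j : ℤ)|

/-- A finite set `S ⊆ X \ NW(f)` is singular: it consists of mutually singular points, i.e.
every family of respective neighbourhoods of its points is mutually singular. -/
def IsSingularSet {X : Type*} [TopologicalSpace X] (f : X → X) (S : Set X) : Prop :=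
  S.Finite ∧ (∀ x ∈ S, x ∉ nonWandering f) ∧
  ∀ (L : ℕ) (x : Fin L → X), Function.Injective x → Set.range x = S →
    ∀ U : Fin L → Set X, (∀ j, U j ∈ nhds (x j)) → MutuallySingularSets f U

/-- The set of codings of length-`n` orbit segments of points of `Y` relative to the family
`F`, where the letter `none` stands for `Y_∞ = Y \ ⋃ F`. -/
def codings {X : Type*} (f : X → X) {L : ℕ} (F : Fin L → Set X) (Y : Set X) (n : ℕ) :
    Set (Fin n → Option (Fin L)) :=
  {w | ∃ x ∈ Y, ∀ j : Fin n, match w j with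
    | some i => f^[(j : ℕ)] x ∈ F i
    | none => f^[(j : ℕ)] x ∈ Y \ ⋃ i, F i}

/-- The polynomial entropy of `f` on `Y` relative to the family `F`:
`limsup_n log #A_n(F;Y) / log n`. -/
noncomputable def polEntRel {X : Type*} (f : X → X) {L : ℕ} (F : Fin L → Set X) (Y : Set X) :
    ℝ≥0∞ :=
  Filter.atTop.limsup fun n : ℕ =>
    ENNReal.ofReal (Real.log ((codings f F Y n).ncard) / Real.log n)

/-- The circle is connected. -/
theorem circle_isConnected_univ : IsConnected (Set.univ : Set Circle) := by
  have hsurj : Function.Surjective Circle.exp := fun z => ⟨Complex.arg z, Circle.exp_arg z⟩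
  have : ConnectedSpace Circle :=
    { toPreconnectedSpace := ⟨by
        rw [← Set.image_univ_of_surjective hsurj]
        exact isPreconnected_univ.image _ Circle.exp.continuous.continuousOn⟩,
      toNonempty := ⟨1⟩ }
  exact isConnected_univ

/-!
Since `f` has no fixed point in `(0, 1)`, either every interior orbit increases to `1` or every
one decreases to `0`. Conjugating by `x ↦ 1 - x` and reversing the order of the coordinates, an
isometry preserving `Ã(k)`, reduces the second case to the first.

In the increasing case, a forward orbit spends at most `N(c)` steps in `[c, 1 - c]`. Up to
distance `c`, an orbit segment of length `n` is therefore determined by the time it enters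
`[c, 1]` and by its positions on the grid `cℕ` during the next `N(c)` steps. This gives at most
`(n + 1) A` classes per coordinate, so `S(n, ε) ≤ ((n + 1) A)^k`. Conversely, the points
`e^{-m}(1/2)`, `m < n`, are `(n, ε₀)`-separated. The increasing enumerations of their `k`-element
subsets are `choose n k ≥ n^k / (2^k k!)` separated points of `Ã(k)`.
-/

open Function unitInterval

section DynamicalDistance

variable {X : Type*} [MetricSpace X] (f : X → X)

theorem dynDist_nonneg (n : ℕ) (x y : X) : 0 ≤ dynDist f n x y := NNReal.coe_nonneg _

theorem dynDist_comm (n : ℕ) (x y : X) : dynDist f n x y = dynDist f n y x := by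
  simp only [dynDist, nndist_comm]

theorem dynDist_le_iff {n : ℕ} {x y : X} {r : ℝ} (hr : 0 ≤ r) :
    dynDist f n x y ≤ r ↔ ∀ t < n, dist (f^[t] x) (f^[t] y) ≤ r := by
  lift r to NNReal using hr
  simp only [dynDist, NNReal.coe_le_coe, Finset.sup_le_iff, Finset.mem_range, dist_le_coe]

theorem dist_iterate_le_dynDist {n t : ℕ} (ht : t < n) (x y : X) :
    dist (f^[t] x) (f^[t] y) ≤ dynDist f n x y :=
  (dynDist_le_iff f (dynDist_nonneg f n x y)).1 le_rfl t ht

theorem dynDist_piMap_le_iff {ι : Type*} [Fintype ι] {n : ℕ} {x y : ι → X} {r : ℝ}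
    (hr : 0 ≤ r) :
    dynDist (fun (x : ι → X) j ↦ f (x j)) n x y ≤ r ↔
      ∀ j, dynDist f n (x j) (y j) ≤ r := by
  have hpi : (fun (x : ι → X) j ↦ f (x j)) = Pi.map fun _ ↦ f := rfl
  simp only [dynDist_le_iff _ hr, hpi, Pi.map_iterate, Pi.map_apply, dist_pi_le_iff hr]
  exact ⟨fun h j t ht ↦ h t ht j, fun h t ht j ↦ h j t ht⟩

theorem dynDist_le_dynDist_piMap {ι : Type*} [Fintype ι] (n : ℕ) (x y : ι → X) (j : ι) :
    dynDist f n (x j) (y j) ≤ dynDist (fun (x : ι → X) j ↦ f (x j)) n x y :=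
  (dynDist_piMap_le_iff f (dynDist_nonneg _ n x y)).1 le_rfl j

theorem dynDist_semiconj {X' : Type*} [MetricSpace X'] {φ : X → X'} (hφ : Isometry φ)
    {g : X' → X'} (h : Semiconj φ f g) (n : ℕ) (x y : X) :
    dynDist g n (φ x) (φ y) = dynDist f n x y := by
  simp only [dynDist, ← (h.iterate_right _).eq, hφ.nndist_eq]

end DynamicalDistance

section SeparatedSets

variable {X : Type*} [MetricSpace X] {f : X → X} {n : ℕ} {ε : ℝ}

theorem IsDynSeparated.card_le_card_of_code {E : Finset X} (hE : IsDynSeparated f n ε E)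
    {α : Type*} [Fintype α] (code : X → α)
    (hcode : ∀ x y, code x = code y → dynDist f n x y < ε) : E.card ≤ Fintype.card α := by
  refine Finset.card_le_card_of_injOn code (t := Finset.univ)
    (fun _ _ ↦ Finset.mem_coe.2 (Finset.mem_univ _)) fun x hx y hy hxy ↦ ?_
  by_contra hne
  exact (hE x hx y hy hne).not_gt (hcode x y hxy)

theorem IsDynSeparated.image {X' : Type*} [MetricSpace X'] [DecidableEq X'] {φ : X → X'}
    (hφ : Isometry φ) {g : X' → X'} (h : Semiconj φ f g) {E : Finset X}
    (hE : IsDynSeparated f n ε E) : IsDynSeparated g n ε (E.image φ) := by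
  simp only [IsDynSeparated, Finset.mem_image]
  rintro _ ⟨x, hx, rfl⟩ _ ⟨y, hy, rfl⟩ hne
  rw [dynDist_semiconj f hφ h]
  exact hE x hx y hy (ne_of_apply_ne φ hne)

theorem maxSep_le {Y : Set X} {N : ℕ}
    (h : ∀ E : Finset X, ↑E ⊆ Y → IsDynSeparated f n ε E → E.card ≤ N) :
    maxSep f Y n ε ≤ N := by
  refine csSup_le ⟨0, ∅, by simp, rfl, by simp [IsDynSeparated]⟩ ?_
  rintro _ ⟨E, hEY, rfl, hE⟩
  exact h E hEY hE

theorem le_maxSep {Y : Set X} {N : ℕ}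
    (hbdd : ∀ E : Finset X, ↑E ⊆ Y → IsDynSeparated f n ε E → E.card ≤ N)
    {E : Finset X} (hEY : ↑E ⊆ Y) (hE : IsDynSeparated f n ε E) :
    E.card ≤ maxSep f Y n ε := by
  refine le_csSup ⟨N, ?_⟩ ⟨E, hEY, rfl, hE⟩
  rintro _ ⟨E', hE'Y, rfl, hE'⟩
  exact hbdd E' hE'Y hE'

theorem setOf_card_isDynSeparated_subset_image {X' : Type*} [MetricSpace X'] {φ : X → X'}
    (hφ : Isometry φ) {g : X' → X'} (h : Semiconj φ f g) (Y : Set X) (n : ℕ) (ε : ℝ) :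
    {m | ∃ E : Finset X, ↑E ⊆ Y ∧ E.card = m ∧ IsDynSeparated f n ε E} ⊆
      {m | ∃ E : Finset X', ↑E ⊆ φ '' Y ∧ E.card = m ∧ IsDynSeparated g n ε E} := by
  classical
  rintro _ ⟨E, hEY, rfl, hE⟩
  refine ⟨E.image φ, ?_, Finset.card_image_of_injective E hφ.injective, hE.image hφ h⟩
  rw [Finset.coe_image]
  exact Set.image_mono hEY

theorem maxSep_image_isometryEquiv {X' : Type*} [MetricSpace X'] (φ : X ≃ᵢ X') {g : X' → X'}
    (h : Semiconj φ f g) (Y : Set X) (n : ℕ) (ε : ℝ) :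
    maxSep g (φ '' Y) n ε = maxSep f Y n ε := by
  have h' : Semiconj φ.symm g f := h.inverse_left φ.symm_apply_apply φ.apply_symm_apply
  refine congrArg sSup <| subset_antisymm ?_ <|
    setOf_card_isDynSeparated_subset_image φ.isometry h Y n ε
  simpa only [φ.image_symm, Set.preimage_image_eq _ φ.injective] using
    setOf_card_isDynSeparated_subset_image φ.symm.isometry h' (φ '' Y) n ε

theorem polEnt_image_isometryEquiv {X' : Type*} [MetricSpace X'] (φ : X ≃ᵢ X') {g : X' → X'}
    (h : Semiconj φ f g) (Y : Set X) : polEnt g (φ '' Y) = polEnt f Y := by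
  simp only [polEnt, maxSep_image_isometryEquiv φ h]

end SeparatedSets

section LogGrowth

theorem tendsto_ofReal_add_div_log (d a : ℝ) :
    Tendsto (fun n : ℕ ↦ ENNReal.ofReal (d + a / Real.log n)) atTop
      (𝓝 (ENNReal.ofReal d)) := by
  have hlog : Tendsto (fun n : ℕ ↦ Real.log n) atTop atTop :=
    Real.tendsto_log_atTop.comp tendsto_natCast_atTop_atTop
  have := (tendsto_const_nhds (x := d)).add ((tendsto_const_nhds (x := a)).div_atTop hlog)
  rw [add_zero] at this
  exact (ENNReal.continuous_ofReal.tendsto d).comp this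

variable {S : ℕ → ℕ} {d : ℕ}

theorem limsup_ofReal_log_div_log_le {C : ℝ}
    (h : ∀ᶠ n : ℕ in atTop, (S n : ℝ) ≤ C * n ^ d) :
    limsup (fun n : ℕ ↦ ENNReal.ofReal (Real.log (S n) / Real.log n)) atTop ≤ d := by
  rw [← ENNReal.ofReal_natCast, ← (tendsto_ofReal_add_div_log d (Real.log C)).limsup_eq]
  refine limsup_le_limsup ?_
  filter_upwards [h, eventually_ge_atTop 2] with n hSn hn
  have hlogn : 0 < Real.log n := Real.log_pos (by exact_mod_cast hn)
  rcases (S n).eq_zero_or_pos with hS | hS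
  · simp [hS]
  have hS1 : (1 : ℝ) ≤ S n := by exact_mod_cast hS
  have hC : 0 < C := pos_of_mul_pos_left (b := (n : ℝ) ^ d) (by linarith) (by positivity)
  refine ENNReal.ofReal_le_ofReal ?_
  rw [div_le_iff₀ hlogn, add_mul, div_mul_cancel₀ _ hlogn.ne']
  calc Real.log (S n) ≤ Real.log (C * n ^ d) := Real.log_le_log (by linarith) hSn
    _ = d * Real.log n + Real.log C := by
      rw [Real.log_mul hC.ne' (by positivity), Real.log_pow, add_comm]

theorem le_limsup_ofReal_log_div_log {c : ℝ} (hc : 0 < c)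
    (h : ∀ᶠ n : ℕ in atTop, c * n ^ d ≤ S n) :
    (d : ℝ≥0∞) ≤
      limsup (fun n : ℕ ↦ ENNReal.ofReal (Real.log (S n) / Real.log n)) atTop := by
  rw [← ENNReal.ofReal_natCast, ← (tendsto_ofReal_add_div_log d (Real.log c)).limsup_eq]
  refine limsup_le_limsup ?_
  filter_upwards [h, eventually_ge_atTop 2] with n hSn hn
  have hlogn : 0 < Real.log n := Real.log_pos (by exact_mod_cast hn)
  refine ENNReal.ofReal_le_ofReal ?_
  rw [le_div_iff₀ hlogn, add_mul, div_mul_cancel₀ _ hlogn.ne']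
  calc d * Real.log n + Real.log c = Real.log (c * n ^ d) := by
        rw [Real.log_mul hc.ne' (by positivity), Real.log_pow, add_comm]
    _ ≤ Real.log (S n) := Real.log_le_log (by positivity) hSn

end LogGrowth

theorem abs_sub_lt_of_floor_div_eq {a b c : ℝ} (hc : 0 < c) (ha : 0 ≤ a) (hb : 0 ≤ b)
    (h : ⌊a / c⌋₊ = ⌊b / c⌋₊) : |a - b| < c := by
  have hfloor : ⌊a / c⌋ = ⌊b / c⌋ := by
    rw [← Int.natCast_floor_eq_floor (by positivity),
      ← Int.natCast_floor_eq_floor (by positivity), h]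
  have := Int.abs_sub_lt_one_of_floor_eq_floor hfloor
  rwa [← sub_div, abs_div, abs_of_pos hc, div_lt_one hc] at this

theorem lt_apply_or_apply_lt_of_ne {g : I → I} (hg : Continuous g)
    (hfix : ∀ x : I, 0 < x → x < 1 → g x ≠ x) :
    (∀ x : I, 0 < x → x < 1 → x < g x) ∨ ∀ x : I, 0 < x → x < 1 → g x < x := by
  by_contra! h
  obtain ⟨⟨x, hx0, hx1, hgx⟩, ⟨y, hy0, hy1, hgy⟩⟩ := h
  obtain ⟨z, ⟨hz0, hz1⟩, hz⟩ := isPreconnected_Ioo.intermediate_value₂ (a := y) (b := x)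
    ⟨hy0, hy1⟩ ⟨hx0, hx1⟩ continuousOn_id hg.continuousOn hgy hgx
  exact hfix z hz0 hz1 hz.symm

section UpperBound

variable {e : I → I}

theorem le_apply_of_lt_apply (h1 : e 1 = 1) (hlt : ∀ x : I, 0 < x → x < 1 → x < e x) (x : I) :
    x ≤ e x := by
  rcases (nonneg' : 0 ≤ x).eq_or_lt with rfl | hx0
  · exact nonneg'
  rcases (le_one' : x ≤ 1).eq_or_lt with rfl | hx1
  · exact h1.ge
  exact (hlt x hx0 hx1).le

theorem exists_iterate_ge_one_sub (he : Continuous e) (h1 : e 1 = 1)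
    (hlt : ∀ x : I, 0 < x → x < 1 → x < e x) {c : ℝ} (hc : 0 < c) :
    ∃ N : ℕ, ∀ x : I, c ≤ x → ∀ t ≥ N, 1 - c ≤ (e^[t] x : ℝ) := by
  let M : Set I := {x | c ≤ x ∧ (x : ℝ) ≤ 1 - c}
  have hM : IsCompact M :=
    (isClosed_le continuous_const continuous_subtype_val).inter
      (isClosed_le continuous_subtype_val continuous_const) |>.isCompact
  -- on `M` every step moves the point up by at least `μ > 0`
  obtain ⟨μ, hμ, hμM⟩ := hM.exists_forall_le' (f := fun x ↦ (e x : ℝ) - x) (by fun_prop)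
    fun x ⟨hcx, hx1⟩ ↦ sub_pos.2 (hlt x (hc.trans_le hcx) (by change (x : ℝ) < 1; linarith))
  refine ⟨⌈1 / μ⌉₊, fun x hx t ht ↦ ?_⟩
  have hstep (i : ℕ) : min (1 - c) (c + i * μ) ≤ (e^[i] x : ℝ) := by
    induction i with
    | zero => simpa using Or.inr hx
    | succ i ih =>
      set y := e^[i] x
      rw [iterate_succ_apply']
      have hy : (y : ℝ) ≤ e y := le_apply_of_lt_apply h1 hlt y
      by_cases hy1 : 1 - c ≤ (y : ℝ)
      · exact (min_le_left _ _).trans (hy1.trans hy)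
      have hiy : c + i * μ ≤ y := (min_le_iff.1 ih).resolve_left hy1
      have hyM : μ ≤ (e y : ℝ) - y :=
        hμM y ⟨by linarith [mul_nonneg i.cast_nonneg hμ.le], by linarith⟩
      refine (min_le_right _ _).trans ?_
      push_cast
      linarith
  have hNμ : 1 ≤ (⌈1 / μ⌉₊ : ℝ) * μ := (div_le_iff₀ hμ).1 (Nat.le_ceil _)
  calc 1 - c ≤ min (1 - c) (c + ⌈1 / μ⌉₊ * μ) := le_min le_rfl (by linarith)
    _ ≤ e^[⌈1 / μ⌉₊] x := hstep _
    _ ≤ e^[t] x := monotone_iterate_of_id_le (le_apply_of_lt_apply h1 hlt) ht x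

noncomputable def entryTime (e : I → I) (c : ℝ) (n : ℕ) (x : I) : ℕ :=
  sInf {t | t = n ∨ c ≤ (e^[t] x : ℝ)}

variable {c : ℝ} {n t : ℕ} {x : I}

theorem entryTime_le : entryTime e c n x ≤ n := Nat.sInf_le (Or.inl rfl)

theorem iterate_lt_of_lt_entryTime (ht : t < entryTime e c n x) : (e^[t] x : ℝ) < c :=
  not_le.1 fun h ↦ Nat.notMem_of_lt_sInf ht (Or.inr h)

theorem le_iterate_entryTime (h : entryTime e c n x < n) :
    c ≤ (e^[entryTime e c n x] x : ℝ) :=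
  (Nat.sInf_mem (s := {t | t = n ∨ c ≤ (e^[t] x : ℝ)}) ⟨n, Or.inl rfl⟩).resolve_left h.ne

theorem exists_code_dynDist_le (he : Continuous e) (h1 : e 1 = 1)
    (hlt : ∀ x : I, 0 < x → x < 1 → x < e x) (hc : 0 < c) :
    ∃ A : ℕ, ∀ n : ℕ, ∃ code : I → Fin (n + 1) × Fin A,
      ∀ x y, code x = code y → dynDist e n x y ≤ c := by
  obtain ⟨N, hN⟩ := exists_iterate_ge_one_sub he h1 hlt hc
  let digit (y : I) : Fin (⌊1 / c⌋₊ + 1) :=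
    ⟨⌊(y : ℝ) / c⌋₊, Nat.lt_succ_of_le (Nat.floor_le_floor (by gcongr; exact le_one'))⟩
  refine ⟨(⌊1 / c⌋₊ + 1) ^ N, fun n ↦ ?_⟩
  refine ⟨fun x ↦ (⟨entryTime e c n x, Nat.lt_succ_of_le entryTime_le⟩,
    finFunctionFinEquiv fun i : Fin N ↦ digit (e^[entryTime e c n x + i] x)), fun x y hxy ↦ ?_⟩
  simp only [Prod.mk.injEq, Fin.mk.injEq, EmbeddingLike.apply_eq_iff_eq, funext_iff] at hxy
  obtain ⟨hs, hdigit⟩ := hxy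
  refine (dynDist_le_iff e hc.le).2 fun t ht ↦ ?_
  rw [Subtype.dist_eq, Real.dist_eq]
  set s := entryTime e c n x
  rcases lt_or_ge t s with hts | hst
  · exact abs_sub_le_of_nonneg_of_le nonneg' (iterate_lt_of_lt_entryTime hts).le nonneg'
      (iterate_lt_of_lt_entryTime (hs ▸ hts)).le
  rcases lt_or_ge t (s + N) with htN | hNt
  · obtain ⟨i, rfl⟩ := Nat.exists_eq_add_of_le hst
    have hi := congrArg Fin.val (hdigit ⟨i, by omega⟩)
    rw [← hs] at hi
    exact (abs_sub_lt_of_floor_div_eq hc nonneg' nonneg' hi).le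
  have hsn : s < n := by omega
  have hx := hN _ (le_iterate_entryTime hsn) (t - s) (by omega)
  have hy := hN _ (le_iterate_entryTime (hs ▸ hsn)) (t - s) (by omega)
  rw [← iterate_add_apply, Nat.sub_add_cancel hst] at hx
  rw [← iterate_add_apply, ← hs, Nat.sub_add_cancel hst] at hy
  have := le_one (e^[t] x)
  have := le_one (e^[t] y)
  exact abs_sub_le_iff.2 ⟨by linarith, by linarith⟩

variable {ι : Type*} [Fintype ι]

theorem exists_card_le_of_isDynSeparated_piMap (he : Continuous e) (h1 : e 1 = 1)
    (hlt : ∀ x : I, 0 < x → x < 1 → x < e x) {ε : ℝ} (hε : 0 < ε) :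
    ∃ A : ℕ, ∀ (n : ℕ) (E : Finset (ι → I)),
      IsDynSeparated (fun (x : ι → I) j ↦ e (x j)) n ε E →
        E.card ≤ ((n + 1) * A) ^ Fintype.card ι := by
  classical
  obtain ⟨A, hA⟩ := exists_code_dynDist_le he h1 hlt (half_pos hε)
  refine ⟨A, fun n E hE ↦ ?_⟩
  obtain ⟨code, hcode⟩ := hA n
  simpa using hE.card_le_card_of_code (fun x j ↦ code (x j)) fun x y hxy ↦
    ((dynDist_piMap_le_iff e (half_pos hε).le).2 fun j ↦ hcode _ _ (congrFun hxy j)).trans_lt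
      (half_lt_self hε)

theorem polEnt_piMap_le (he : Continuous e) (h1 : e 1 = 1)
    (hlt : ∀ x : I, 0 < x → x < 1 → x < e x) (Y : Set (ι → I)) :
    polEnt (fun (x : ι → I) j ↦ e (x j)) Y ≤ Fintype.card ι := by
  refine iSup₂_le fun ε hε ↦ ?_
  obtain ⟨A, hA⟩ := exists_card_le_of_isDynSeparated_piMap (ι := ι) he h1 hlt hε
  refine limsup_ofReal_log_div_log_le (C := ((2 * A) ^ Fintype.card ι : ℕ)) ?_
  filter_upwards [eventually_ge_atTop 1] with n hn
  have hS := maxSep_le (Y := Y) fun E _ hE ↦ hA n E hE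
  have hnA : (n + 1) * A ≤ 2 * A * n := by nlinarith
  exact_mod_cast hS.trans (by rw [← mul_pow]; gcongr)

end UpperBound

section LowerBound

theorem exists_isDynSeparated_piMap_strictMono {X : Type*} [MetricSpace X] [LinearOrder X]
    (f : X → X) {n : ℕ} {ε : ℝ} {P : Finset X} (hP : IsDynSeparated f n ε P) (k : ℕ) :
    ∃ E : Finset (Fin k → X), (∀ x ∈ E, StrictMono x) ∧ E.card = P.card.choose k ∧
      IsDynSeparated (fun (x : Fin k → X) j ↦ f (x j)) n ε E := by
  classical
  let enum (s : P.powersetCard k) : Fin k ↪o X :=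
    s.1.orderEmbOfFin (Finset.mem_powersetCard.1 s.2).2
  have henum (s : P.powersetCard k) (j : Fin k) : enum s j ∈ P :=
    (Finset.mem_powersetCard.1 s.2).1 (Finset.orderEmbOfFin_mem _ _ j)
  have hinj : Injective fun s ↦ ⇑(enum s) := by
    intro s s' h
    refine Subtype.ext (Finset.coe_injective ?_)
    rw [← Finset.range_orderEmbOfFin s.1 (Finset.mem_powersetCard.1 s.2).2,
      ← Finset.range_orderEmbOfFin s'.1 (Finset.mem_powersetCard.1 s'.2).2]
    exact congrArg Set.range h
  refine ⟨Finset.univ.image fun s ↦ ⇑(enum s), ?_, ?_, ?_⟩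
  · simp only [Finset.mem_image, Finset.mem_univ, true_and]
    rintro _ ⟨s, rfl⟩
    exact (enum s).strictMono
  · rw [Finset.card_image_of_injective _ hinj, Finset.card_univ, Fintype.card_coe,
      Finset.card_powersetCard]
  · simp only [IsDynSeparated, Finset.mem_image, Finset.mem_univ, true_and]
    rintro _ ⟨s, rfl⟩ _ ⟨s', rfl⟩ hne
    obtain ⟨j, hj⟩ := Function.ne_iff.1 hne
    exact (hP _ (henum s j) _ (henum s' j) hj).trans (dynDist_le_dynDist_piMap f n _ _ j)

variable {e : I ≃ₜ I}

theorem symm_apply_lt (h1 : e 1 = 1) (hlt : ∀ x : I, 0 < x → x < 1 → x < e x) {y : I}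
    (hy0 : 0 < y) (hy1 : y < 1) : e.symm y < y := by
  refine (le_apply_of_lt_apply h1 hlt (e.symm y)).trans_eq (e.apply_symm_apply y) |>.lt_of_ne ?_
  intro hy
  refine (hlt y hy0 hy1).ne' ?_
  calc e y = e (e.symm y) := by rw [hy]
    _ = y := e.apply_symm_apply y

theorem symm_apply_pos (h0 : e 0 = 0) {y : I} (hy : 0 < y) : 0 < e.symm y := by
  refine nonneg'.lt_of_ne fun h ↦ hy.ne ?_
  rw [← e.apply_symm_apply y, ← h, h0]

theorem strictAnti_iterate_symm (h0 : e 0 = 0) (h1 : e 1 = 1)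
    (hlt : ∀ x : I, 0 < x → x < 1 → x < e x) {a : I} (ha0 : 0 < a) (ha1 : a < 1) :
    StrictAnti fun m ↦ e.symm^[m] a := by
  have hmem (m : ℕ) : 0 < e.symm^[m] a ∧ e.symm^[m] a < 1 := by
    induction m with
    | zero => exact ⟨ha0, ha1⟩
    | succ m ih =>
      rw [iterate_succ_apply']
      exact ⟨symm_apply_pos h0 ih.1, (symm_apply_lt h1 hlt ih.1 ih.2).trans ih.2⟩
  refine strictAnti_nat_of_succ_lt fun m ↦ ?_
  rw [iterate_succ_apply']
  exact symm_apply_lt h1 hlt (hmem m).1 (hmem m).2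

theorem isDynSeparated_backwardOrbit (h0 : e 0 = 0) (h1 : e 1 = 1)
    (hlt : ∀ x : I, 0 < x → x < 1 → x < e x) {a : I} (ha0 : 0 < a) (ha1 : a < 1) (n : ℕ) :
    IsDynSeparated e n (a - e.symm a) ((Finset.range n).image fun m ↦ e.symm^[m] a) := by
  have hanti := strictAnti_iterate_symm h0 h1 hlt ha0 ha1
  suffices h : ∀ m m', m < m' → m < n →
      (a : ℝ) - e.symm a ≤ dynDist e n (e.symm^[m] a) (e.symm^[m'] a) by
    simp only [IsDynSeparated, Finset.mem_image, Finset.mem_range]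
    rintro _ ⟨m, hm, rfl⟩ _ ⟨m', hm', rfl⟩ hne
    rcases lt_or_gt_of_ne (ne_of_apply_ne (fun m ↦ e.symm^[m] a) hne) with hmm' | hmm'
    · exact h m m' hmm' hm
    · exact dynDist_comm e n _ _ ▸ h m' m hmm' hm'
  intro m m' hmm' hm
  obtain ⟨j, rfl⟩ := Nat.exists_eq_add_of_lt hmm'
  -- at time `m` the two orbits are at `a` and at `e.symm^[j + 1] a ≤ e.symm a`
  have hback (i : ℕ) : e^[m] (e.symm^[m + i] a) = e.symm^[i] a := by
    rw [iterate_add_apply]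
    exact LeftInverse.iterate e.apply_symm_apply m _
  have hj : (e.symm^[j + 1] a : ℝ) ≤ e.symm a := hanti.antitone (Nat.le_add_left 1 j)
  calc (a : ℝ) - e.symm a ≤ a - e.symm^[j + 1] a := by linarith
    _ ≤ dist (e^[m] (e.symm^[m + 0] a)) (e^[m] (e.symm^[m + (j + 1)] a)) := by
      rw [hback, hback, Subtype.dist_eq, Real.dist_eq]
      exact le_abs_self _
    _ ≤ _ := dist_iterate_le_dynDist e hm _ _

theorem le_polEnt_piMap_strictMono (h0 : e 0 = 0) (h1 : e 1 = 1)
    (hlt : ∀ x : I, 0 < x → x < 1 → x < e x) (k : ℕ) :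
    (k : ℝ≥0∞) ≤ polEnt (fun (x : Fin k → I) j ↦ e (x j)) {x | StrictMono x} := by
  let a : I := ⟨1 / 2, by norm_num, by norm_num⟩
  have ha0 : 0 < a := by change (0 : ℝ) < 1 / 2; norm_num
  have ha1 : a < 1 := by change (1 / 2 : ℝ) < 1; norm_num
  have hε : 0 < (a : ℝ) - e.symm a := sub_pos.2 (symm_apply_lt h1 hlt ha0 ha1)
  obtain ⟨A, hA⟩ := exists_card_le_of_isDynSeparated_piMap (ι := Fin k) e.continuous h1 hlt hε
  refine le_iSup₂_of_le _ hε <| le_limsup_ofReal_log_div_log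
    (c := 1 / (2 ^ k * k.factorial)) (by positivity) ?_
  filter_upwards [eventually_ge_atTop (2 * k)] with n hn
  obtain ⟨E, hEY, hEcard, hE⟩ := exists_isDynSeparated_piMap_strictMono e
    (isDynSeparated_backwardOrbit h0 h1 hlt ha0 ha1 n) k
  rw [Finset.card_image_of_injective _ (strictAnti_iterate_symm h0 h1 hlt ha0 ha1).injective,
    Finset.card_range] at hEcard
  have hchoose := hEcard ▸ le_maxSep (fun E _ hE ↦ hA n E hE) hEY hE
  have hnk : (n : ℝ) / 2 ≤ (n + 1 - k : ℕ) := by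
    have : (2 * k : ℝ) ≤ n := by exact_mod_cast hn
    rw [Nat.cast_sub (by omega)]
    push_cast
    linarith
  calc 1 / (2 ^ k * k.factorial) * (n : ℝ) ^ k = ((n : ℝ) / 2) ^ k / k.factorial := by
        rw [div_pow]; field_simp
    _ ≤ (n + 1 - k : ℕ) ^ k / k.factorial := by gcongr
    _ ≤ n.choose k := Nat.pow_le_choose k n
    _ ≤ _ := by exact_mod_cast hchoose

theorem polEnt_piMap_strictMono_eq (h0 : e 0 = 0) (h1 : e 1 = 1)
    (hlt : ∀ x : I, 0 < x → x < 1 → x < e x) (k : ℕ) :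
    polEnt (fun (x : Fin k → I) j ↦ e (x j)) {x | StrictMono x} = k :=
  le_antisymm (by simpa using polEnt_piMap_le e.continuous h1 hlt {x : Fin k → I | StrictMono x})
    (le_polEnt_piMap_strictMono h0 h1 hlt k)

end LowerBound

section Reflection

theorem unitInterval.isometry_symm : Isometry σ :=
  Isometry.of_dist_eq fun x y ↦ by
    rw [Subtype.dist_eq, Subtype.dist_eq, coe_symm_eq, coe_symm_eq, dist_sub_left]

@[simps]
def revSymm (k : ℕ) : (Fin k → I) ≃ᵢ (Fin k → I) where
  toFun x j := σ (x j.rev)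
  invFun x j := σ (x j.rev)
  left_inv x := by simp
  right_inv x := by simp
  isometry_toFun x y := by
    simp only [edist_pi_def, Finset.sup_univ_eq_iSup, isometry_symm.edist_eq]
    exact Equiv.iSup_comp (g := fun j ↦ edist (x j) (y j)) Fin.revPerm

theorem strictMono_revSymm {k : ℕ} {x : Fin k → I} (hx : StrictMono x) :
    StrictMono (revSymm k x) :=
  fun _ _ hij ↦ symm_lt_symm.2 (hx (Fin.rev_lt_rev.2 hij))

theorem image_revSymm_strictMono (k : ℕ) :
    revSymm k '' {x | StrictMono x} = {x | StrictMono x} :=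
  subset_antisymm (image_subset_iff.2 fun _ hx ↦ strictMono_revSymm hx) fun x hx ↦
    ⟨revSymm k x, strictMono_revSymm hx, (revSymm k).apply_symm_apply x⟩

theorem polEnt_piMap_strictMono_eq_conj_symm (f : I → I) (k : ℕ) :
    polEnt (fun (x : Fin k → I) j ↦ f (x j)) {x | StrictMono x} =
      polEnt (fun (x : Fin k → I) j ↦ σ (f (σ (x j)))) {x | StrictMono x} := by
  have hconj : Semiconj (revSymm k) (fun x j ↦ f (x j)) (fun x j ↦ σ (f (σ (x j)))) :=
    fun x ↦ funext fun j ↦ by simp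
  rw [← polEnt_image_isometryEquiv (revSymm k) hconj, image_revSymm_strictMono]

end Reflection

theorem stmt16_general (f : ↥unitInterval ≃ₜ ↥unitInterval)
    (h01 : Function.fixedPoints ⇑f = {0, 1}) (k : ℕ) :
    polEnt (fun x : Fin k → ↥unitInterval => fun j => f (x j))
      {x : Fin k → ↥unitInterval | StrictMono x} = (k : ℝ≥0∞) := by
  have hfix (x : I) : f x = x ↔ x = 0 ∨ x = 1 := Set.ext_iff.1 h01 x
  have h0 : f 0 = 0 := (hfix 0).2 (.inl rfl)
  have h1 : f 1 = 1 := (hfix 1).2 (.inr rfl)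
  rcases lt_apply_or_apply_lt_of_ne f.continuous
    fun x hx0 hx1 hx ↦ ((hfix x).1 hx).elim hx0.ne' hx1.ne with hup | hdown
  · exact polEnt_piMap_strictMono_eq h0 h1 hup k
  · rw [polEnt_piMap_strictMono_eq_conj_symm]
    exact polEnt_piMap_strictMono_eq (e := symmHomeomorph.trans (f.trans symmHomeomorph))
      (by simp [h1]) (by simp [h0]) (fun x hx0 hx1 ↦ lt_symm_comm.2 (hdown (σ x)
        (by rwa [lt_symm_comm, symm_zero]) (by rwa [symm_lt_comm, symm_one]))) k

theorem stmt16 (f : ↥unitInterval ≃ₜ ↥unitInterval)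
    (hfix : nonWandering ⇑f = Function.fixedPoints ⇑f)
    (h01 : Function.fixedPoints ⇑f = {0, 1}) (k : ℕ) (hk : 1 ≤ k) :
    polEnt (fun x : Fin k → ↥unitInterval => fun j => f (x j))
      {x : Fin k → ↥unitInterval | StrictMono x} = (k : ℝ≥0∞) :=
  stmt16_general f h01 k
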